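/- Assume the Laurent series g_3 is badly approximable. If p, q ∈ ℚ[x] are coprime, q ≠ 0, and ‖g_3 − p/q‖ = −2‖q‖ − 2 (i.e., p/q is a convergent of g_3 with rate of approximation 2), then the polynomials x³(x−1)·p(x³) and q(x³) are coprime and ‖g_3 − x³(x−1)p(x³)/q(x³)‖ = −6‖q‖ − 2; in particular, x³(x−1)p(x³)/q(x³) is again a convergent of g_3 with rate of approximation 2. -/

import Mathlib

open Polynomial

noncomputable section

/-- The coefficient of `x^{-n}` in the generalized Thue–Morse series `f_d`:
`(-1)^s` if every base-`d` digit of `n` is `0` or `1` and exactly `s` digits equal `1`,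
and `0` otherwise. -/
def tmCoeff (d n : ℕ) : ℚ :=
  if (Nat.digits d n).all (· ≤ 1) then (-1 : ℚ) ^ (Nat.digits d n).sum else 0

/-- We represent the field `ℚ((x⁻¹))` of formal Laurent series in `x⁻¹` as
`LaurentSeries ℚ` in the variable `y = x⁻¹`; the coefficient of `y^n` is the
coefficient of `x^{-n}`.  `fd d` is the generalized Thue–Morse function `f_d`. -/
def fd (d : ℕ) : LaurentSeries ℚ :=
  HahnSeries.ofPowerSeries ℤ ℚ (PowerSeries.mk fun n => tmCoeff d n)

/-- The element `x` of `ℚ((x⁻¹))`, i.e. `y⁻¹`. -/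
def xL : LaurentSeries ℚ := HahnSeries.single (-1 : ℤ) 1

/-- Substitution `x ↦ x^d` on `ℚ((x⁻¹))` (i.e. `y ↦ y^d`). -/
def substPow (d : ℕ) (u : LaurentSeries ℚ) : LaurentSeries ℚ :=
  if h : 0 < d then
    HahnSeries.embDomain
      (OrderEmbedding.ofStrictMono (fun n : ℤ => (d : ℤ) * n)
        (fun a b hab => mul_lt_mul_of_pos_left hab (by exact_mod_cast h))) u
  else 0

/-- The degree `‖u‖` of a Laurent series `u ∈ ℚ((x⁻¹))`: the largest exponent of `x`
with nonzero coefficient, i.e. minus the order in `y = x⁻¹`. -/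
def ldeg (u : LaurentSeries ℚ) : ℤ := -u.order

/-- The embedding of `ℚ[x]` into `ℚ((x⁻¹))`, sending the polynomial variable to `x`. -/
def polyToLS (p : ℚ[X]) : LaurentSeries ℚ := Polynomial.aeval xL p

/-- `u ∈ ℚ((x⁻¹))` is well approximable if for every integer `C` there are polynomials
`p, q`, `q ≠ 0`, with `‖u - p/q‖ < -2‖q‖ - C`. -/
def wellApprox (u : LaurentSeries ℚ) : Prop :=
  ∀ C : ℤ, ∃ p q : ℚ[X], q ≠ 0 ∧
    ldeg (u - polyToLS p / polyToLS q) < -2 * (q.natDegree : ℤ) - C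

/-- `g_d(x) = x^{-d+1} f_d(x)`. -/
def gd (d : ℕ) : LaurentSeries ℚ := HahnSeries.single ((d : ℤ) - 1) 1 * fd d

/-- `h_d(x) = x^{-1} f_d(x)`. -/
def hd (d : ℕ) : LaurentSeries ℚ := HahnSeries.single (1 : ℤ) 1 * fd d

/-- `u_d(x) = (1 - x^{-1}) f_d(x)`. -/
def ud (d : ℕ) : LaurentSeries ℚ := (1 - HahnSeries.single (1 : ℤ) 1) * fd d

/-- The polynomial `1 + x + ⋯ + x^{d-1}`. -/
def sumPow (d : ℕ) : ℚ[X] := ∑ i ∈ Finset.range d, X ^ i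

/-- The real number `f_d(a) = ∏_{t=0}^∞ (1 - a^{-d^t})`. -/
def fdReal (a d : ℕ) : ℝ := ∏' t : ℕ, (1 - (a : ℝ) ^ (-(d ^ t : ℤ)))

/-- A real number `ξ` is badly approximable if there is `c > 0` with
`|ξ - P/Q| ≥ c/Q²` for all integers `P, Q` with `Q ≥ 1`. -/
def badApproxReal (ξ : ℝ) : Prop :=
  ∃ c : ℝ, 0 < c ∧ ∀ P Q : ℤ, 1 ≤ Q → c / (Q : ℝ) ^ 2 ≤ |ξ - (P : ℝ) / Q|

/-!
Comparing base-`d` digits gives `f_d(x) = (1 - x⁻¹) f_d(x^d)`, hence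
`g_d(x) = x^{d(d-2)} (x - 1) g_d(x^d)`. Substituting `x ↦ x^d` in an approximation `p/q` of `g_d`
therefore yields the approximation `x^{d(d-2)} (x - 1) p(x^d) / q(x^d)`, whose error is
`x^{d(d-2)} (x - 1) (g_d - p/q)(x^d)`: the rate `c` becomes `d c - (d - 1)²`. The fixed point of this
map is `c = d - 1` (so `2` for `d = 3`), and an excess `e` over it becomes `d e`; iterating, a single
approximation of rate `> d - 1` makes `g_d` well approximable. This gives the degree formula, and also
coprimality: cancelling a common factor of the new numerator and denominator would keep the error
but lower the degree of the denominator, producing a rate `> d - 1`.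
-/

lemma tmCoeff_add_mul {d : ℕ} (hd : 1 < d) {r : ℕ} (hr : r < d) (m : ℕ) :
    tmCoeff d (r + d * m) = (if r ≤ 1 then (-1) ^ r else 0) * tmCoeff d m := by
  rcases Nat.eq_zero_or_pos (r + m) with h | h
  · obtain ⟨rfl, rfl⟩ : r = 0 ∧ m = 0 := by omega
    simp [tmCoeff]
  rw [tmCoeff, tmCoeff, Nat.digits_add d hd r m hr (by omega)]
  by_cases hr1 : r ≤ 1 <;> by_cases hm : (Nat.digits d m).all (· ≤ 1) <;> simp [hr1, hm, pow_add]

lemma fd_coeff_natCast (d n : ℕ) : (fd d).coeff n = tmCoeff d n := by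
  rw [fd, HahnSeries.ofPowerSeries_apply_coeff, PowerSeries.coeff_mk]

lemma fd_coeff_of_neg (d : ℕ) {k : ℤ} (hk : k < 0) : (fd d).coeff k = 0 := by
  rw [fd, HahnSeries.ofPowerSeries_apply]
  exact HahnSeries.embDomain_of_notMem_range (by rintro ⟨m, hm⟩; simp only [Nat.castOrderEmbedding_apply] at hm; omega)

lemma fd_coeff_add_mul {d : ℕ} (hd : 1 < d) {r : ℕ} (hr : r < d) (m : ℤ) :
    (fd d).coeff (r + d * m) = (if r ≤ 1 then (-1) ^ r else 0) * (fd d).coeff m := by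
  rcases lt_or_ge m 0 with hm | hm
  · have : (r : ℤ) + d * m < 0 := by nlinarith
    rw [fd_coeff_of_neg d hm, fd_coeff_of_neg d this, mul_zero]
  · lift m to ℕ using hm
    rw [fd_coeff_natCast, ← tmCoeff_add_mul hd hr, ← fd_coeff_natCast]
    push_cast
    rfl

section SubstPow

variable {d : ℕ} (hd : 0 < d)

def substPowRingHom : LaurentSeries ℚ →+* LaurentSeries ℚ :=
  HahnSeries.embDomainRingHom (AddMonoidHom.mulLeft (d : ℤ))
    (mul_right_injective₀ (by positivity)) (fun _ _ => mul_le_mul_iff_right₀ (by positivity))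

include hd

lemma substPowRingHom_apply (u : LaurentSeries ℚ) : substPowRingHom hd u = substPow d u := by
  rw [substPow, dif_pos hd]
  rfl

lemma substPow_coeff_mul (u : LaurentSeries ℚ) (m : ℤ) :
    (substPow d u).coeff (d * m) = u.coeff m := by
  rw [substPow, dif_pos hd]
  exact HahnSeries.embDomain_coeff

lemma substPow_coeff_of_not_dvd (u : LaurentSeries ℚ) {k : ℤ} (hk : ¬ (d : ℤ) ∣ k) :
    (substPow d u).coeff k = 0 := by
  rw [substPow, dif_pos hd]
  exact HahnSeries.embDomain_of_notMem_range fun ⟨m, hm⟩ => hk ⟨m, hm.symm⟩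

lemma substPow_single (a : ℤ) (c : ℚ) :
    substPow d (HahnSeries.single a c) = HahnSeries.single (d * a) c := by
  rw [substPow, dif_pos hd]
  exact HahnSeries.embDomain_single

lemma substPow_ne_zero {u : LaurentSeries ℚ} (hu : u ≠ 0) : substPow d u ≠ 0 := by
  rw [← substPowRingHom_apply hd]
  exact (map_ne_zero_iff _ (substPowRingHom hd).injective).2 hu

lemma order_substPow {u : LaurentSeries ℚ} (hu : u ≠ 0) :
    (substPow d u).order = d * u.order := by
  refine le_antisymm (HahnSeries.order_le_of_coeff_ne_zero ?_)
    ((HahnSeries.le_order_iff_forall (substPow_ne_zero hd hu)).2 fun j hj => ?_)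
  · rwa [substPow_coeff_mul hd, Ne, HahnSeries.coeff_order_eq_zero]
  · by_cases hdj : (d : ℤ) ∣ j
    · obtain ⟨m, rfl⟩ := hdj
      rw [substPow_coeff_mul hd]
      exact HahnSeries.coeff_eq_zero_of_lt_order (lt_of_mul_lt_mul_left hj (by positivity))
    · exact substPow_coeff_of_not_dvd hd u hdj

end SubstPow

lemma Int.not_dvd_add_mul {d s : ℤ} (h0 : 0 < s) (hs : s < d) (m : ℤ) : ¬ d ∣ s + d * m := by
  rw [dvd_add_left (dvd_mul_right d m)]
  exact fun h => absurd (Int.le_of_dvd h0 h) (not_le.2 hs)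

lemma coeff_single_one_mul {R : Type*} [Semiring R] (u : LaurentSeries R) (k : ℤ) :
    (HahnSeries.single 1 1 * u).coeff k = u.coeff (k - 1) := by
  simpa using HahnSeries.coeff_single_mul_add (r := (1 : R)) (x := u) (a := k - 1) (b := 1)

theorem fd_eq_mul_substPow {d : ℕ} (hd : 1 < d) :
    fd d = (1 - HahnSeries.single 1 1) * substPow d (fd d) := by
  have hd0 : 0 < d := by omega
  ext k
  obtain ⟨r, m, hr, rfl⟩ : ∃ r : ℕ, ∃ m : ℤ, r < d ∧ k = r + d * m := by
    have h0 := Int.emod_nonneg k (by omega : (d : ℤ) ≠ 0)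
    have h1 := Int.emod_lt_of_pos k (by omega : (0 : ℤ) < d)
    refine ⟨(k % d).toNat, k / d, by omega, ?_⟩
    rw [Int.toNat_of_nonneg h0]
    linear_combination -(Int.emod_add_ediv_mul k d)
  rw [sub_mul, one_mul, HahnSeries.coeff_sub, coeff_single_one_mul, fd_coeff_add_mul hd hr]
  rcases r with _ | _ | r
  · have : (d : ℤ) * m - 1 = (d - 1) + d * (m - 1) := by ring
    simp only [Nat.cast_zero, zero_add, this]
    rw [substPow_coeff_of_not_dvd hd0 _ (Int.not_dvd_add_mul (by omega) (by omega) _)]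
    simp [substPow_coeff_mul hd0]
  · rw [substPow_coeff_of_not_dvd hd0 _ (Int.not_dvd_add_mul (by omega) (by omega) _)]
    simp [substPow_coeff_mul hd0]
  · rw [substPow_coeff_of_not_dvd hd0 _ (Int.not_dvd_add_mul (by omega) (by omega) _),
      show ((r + 2 : ℕ) : ℤ) + d * m - 1 = (r + 1 : ℤ) + d * m by push_cast; ring,
      substPow_coeff_of_not_dvd hd0 _ (Int.not_dvd_add_mul (by omega) (by omega) _)]
    simp

lemma xL_pow (n : ℕ) : xL ^ n = HahnSeries.single (-(n : ℤ)) 1 := by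
  rw [xL, HahnSeries.single_pow, one_pow, nsmul_eq_mul, mul_neg_one]

lemma polyToLS_monomial (n : ℕ) (a : ℚ) :
    polyToLS (monomial n a) = HahnSeries.single (-(n : ℤ)) a := by
  rw [polyToLS, aeval_monomial, xL_pow, HahnSeries.algebraMap_apply', PowerSeries.algebraMap_apply,
    HahnSeries.ofPowerSeries_C, HahnSeries.C_apply, HahnSeries.single_mul_single]
  simp

lemma polyToLS_coeff (r : ℚ[X]) (k : ℤ) :
    (polyToLS r).coeff k = if 0 < k then 0 else r.coeff (-k).toNat := by
  induction r using Polynomial.induction_on' with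
  | add p q hp hq =>
    rw [polyToLS, map_add, HahnSeries.coeff_add, ← polyToLS, ← polyToLS, hp, hq]
    split_ifs <;> simp
  | monomial n a =>
    rw [polyToLS_monomial, HahnSeries.coeff_single, coeff_monomial]
    by_cases hk : 0 < k
    · rw [if_pos hk, if_neg (by omega)]
    · rw [if_neg hk]
      by_cases hkn : k = -n
      · rw [if_pos hkn, if_pos (by omega)]
      · rw [if_neg hkn, if_neg (by omega)]

lemma polyToLS_ne_zero {r : ℚ[X]} (hr : r ≠ 0) : polyToLS r ≠ 0 := by
  refine HahnSeries.ne_zero_of_coeff_ne_zero (g := -(r.natDegree : ℤ)) ?_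
  simpa [polyToLS_coeff] using hr

lemma ldeg_polyToLS {r : ℚ[X]} (hr : r ≠ 0) : ldeg (polyToLS r) = r.natDegree := by
  rw [ldeg, neg_eq_iff_eq_neg]
  refine le_antisymm (HahnSeries.order_le_of_coeff_ne_zero ?_)
    ((HahnSeries.le_order_iff_forall (polyToLS_ne_zero hr)).2 fun j hj => ?_)
  · simpa [polyToLS_coeff] using hr
  · rw [polyToLS_coeff, if_neg (by omega)]
    exact coeff_eq_zero_of_natDegree_lt (by omega)

lemma polyToLS_comp_X_pow {d : ℕ} (hd : 0 < d) (r : ℚ[X]) :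
    polyToLS (r.comp (X ^ d)) = substPow d (polyToLS r) := by
  have hxL : (substPowRingHom hd).toRatAlgHom xL = xL ^ d := by
    rw [RingHom.toRatAlgHom_apply, substPowRingHom_apply hd, xL, substPow_single hd, ← xL, xL_pow,
      mul_neg_one]
  rw [polyToLS, polyToLS, aeval_comp, map_pow, aeval_X, ← hxL, aeval_algHom_apply,
    RingHom.toRatAlgHom_apply, substPowRingHom_apply hd]

lemma polyToLS_mul (r s : ℚ[X]) : polyToLS (r * s) = polyToLS r * polyToLS s :=
  map_mul (aeval xL) r s

lemma ldeg_zero : ldeg 0 = 0 := by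
  rw [ldeg, HahnSeries.order_zero, neg_zero]

lemma ne_zero_of_ldeg_neg {u : LaurentSeries ℚ} (hu : ldeg u < 0) : u ≠ 0 := by
  rintro rfl
  exact hu.ne ldeg_zero

lemma ldeg_mul {u v : LaurentSeries ℚ} (hu : u ≠ 0) (hv : v ≠ 0) :
    ldeg (u * v) = ldeg u + ldeg v := by
  rw [ldeg, ldeg, ldeg, HahnSeries.order_mul hu hv, neg_add]

lemma ldeg_substPow {d : ℕ} (hd : 0 < d) {u : LaurentSeries ℚ} (hu : u ≠ 0) :
    ldeg (substPow d u) = d * ldeg u := by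
  rw [ldeg, ldeg, order_substPow hd hu, mul_neg]

def gdFactor (d : ℕ) : ℚ[X] := X ^ (d * (d - 2)) * (X - 1)

lemma gdFactor_ne_zero (d : ℕ) : gdFactor d ≠ 0 :=
  mul_ne_zero (pow_ne_zero _ X_ne_zero) (X_sub_C_ne_zero 1)

lemma natDegree_gdFactor (d : ℕ) : (gdFactor d).natDegree = d * (d - 2) + 1 := by
  rw [gdFactor]
  compute_degree!

theorem gd_eq_mul_substPow {d : ℕ} (hd : 2 ≤ d) :
    gd d = polyToLS (gdFactor d) * substPow d (gd d) := by
  have hd0 : 0 < d := by omega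
  have hfactor : HahnSeries.single ((d : ℤ) - 1) 1 * (1 - HahnSeries.single 1 1)
      = polyToLS (gdFactor d) * HahnSeries.single (d * ((d : ℤ) - 1)) (1 : ℚ) := by
    rw [gdFactor, polyToLS, map_mul, map_sub, map_pow, aeval_X, map_one (aeval xL), xL_pow, xL,
      ← HahnSeries.single_zero_one]
    simp only [mul_sub, sub_mul, mul_one, HahnSeries.single_mul_single]
    congr 3 <;> push_cast [Nat.cast_sub hd] <;> ring
  rw [gd, ← substPowRingHom_apply hd0, map_mul, substPowRingHom_apply hd0,
    substPowRingHom_apply hd0, substPow_single hd0, ← mul_assoc, ← hfactor, mul_assoc]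
  conv_lhs => rw [fd_eq_mul_substPow (by omega : 1 < d)]

lemma Polynomial.exists_dvd_dvd_of_not_isCoprime {K : Type*} [Field K] {a b : K[X]} (hb : b ≠ 0)
    (h : ¬ IsCoprime a b) : ∃ c : K[X], 0 < c.natDegree ∧ c ∣ a ∧ c ∣ b := by
  by_contra! H
  refine h (isCoprime_of_dvd _ _ (fun hab => hb hab.2) fun c hc hc0 hca hcb => ?_)
  exact (H c (natDegree_pos_iff_degree_pos.2 (degree_pos_of_ne_zero_of_nonunit hc0 hc)) hca) hcb

lemma Polynomial.natDegree_comp_X_pow {R : Type*} [CommSemiring R] (q : R[X]) (d : ℕ) :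
    (q.comp (X ^ d)).natDegree = d * q.natDegree :=
  (natDegree_expand d q).trans (mul_comm _ _)

section Approximation

variable {d : ℕ}

lemma gd_sub_div_comp_X_pow (hd : 2 ≤ d) (p q : ℚ[X]) :
    gd d - polyToLS (gdFactor d * p.comp (X ^ d)) / polyToLS (q.comp (X ^ d))
      = polyToLS (gdFactor d) * substPow d (gd d - polyToLS p / polyToLS q) := by
  have hd0 : 0 < d := by omega
  rw [polyToLS_mul, polyToLS_comp_X_pow hd0, polyToLS_comp_X_pow hd0,
    ← substPowRingHom_apply hd0, ← substPowRingHom_apply hd0, ← substPowRingHom_apply hd0,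
    map_sub, map_div₀]
  conv_lhs => rw [gd_eq_mul_substPow hd, ← substPowRingHom_apply hd0]
  ring

lemma ldeg_gd_sub_div_comp_X_pow (hd : 2 ≤ d) {p q : ℚ[X]}
    (hne : gd d - polyToLS p / polyToLS q ≠ 0) :
    ldeg (gd d - polyToLS (gdFactor d * p.comp (X ^ d)) / polyToLS (q.comp (X ^ d)))
      = d * ldeg (gd d - polyToLS p / polyToLS q) + (d * (d - 2) + 1 : ℕ) := by
  have hd0 : 0 < d := by omega
  rw [gd_sub_div_comp_X_pow hd, ldeg_mul (polyToLS_ne_zero (gdFactor_ne_zero d))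
    (substPow_ne_zero hd0 hne), ldeg_polyToLS (gdFactor_ne_zero d), natDegree_gdFactor,
    ldeg_substPow hd0 hne, add_comm]

lemma ldeg_gd_sub_div_comp_X_pow_le (hd : 2 ≤ d) {e : ℤ} (he : 0 ≤ e) {p q : ℚ[X]}
    (h : ldeg (gd d - polyToLS p / polyToLS q) ≤ -2 * q.natDegree - (d - 1) - e) :
    ldeg (gd d - polyToLS (gdFactor d * p.comp (X ^ d)) / polyToLS (q.comp (X ^ d)))
      ≤ -2 * (q.comp (X ^ d)).natDegree - (d - 1) - d * e := by
  have hne : gd d - polyToLS p / polyToLS q ≠ 0 := ne_zero_of_ldeg_neg (by omega)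
  rw [ldeg_gd_sub_div_comp_X_pow hd hne, natDegree_comp_X_pow]
  push_cast [Nat.cast_sub hd]
  nlinarith [mul_le_mul_of_nonneg_left h (by positivity : (0 : ℤ) ≤ d)]

lemma exists_approx_gd_of_excess (hd : 2 ≤ d) (k : ℕ) {e : ℤ} (he : 0 ≤ e) {p q : ℚ[X]}
    (hq : q ≠ 0) (h : ldeg (gd d - polyToLS p / polyToLS q) ≤ -2 * q.natDegree - (d - 1) - e) :
    ∃ p' q' : ℚ[X], q' ≠ 0 ∧
      ldeg (gd d - polyToLS p' / polyToLS q') ≤ -2 * q'.natDegree - (d - 1) - d ^ k * e := by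
  induction k generalizing e p q with
  | zero => exact ⟨p, q, hq, by simpa using h⟩
  | succ k ih =>
    obtain ⟨p', q', hq', h'⟩ := ih (by positivity) ((expand_eq_zero (by omega)).not.2 hq)
      (ldeg_gd_sub_div_comp_X_pow_le hd he h)
    exact ⟨p', q', hq', by rwa [pow_succ, mul_assoc]⟩

theorem wellApprox_gd_of_ldeg_lt (hd : 2 ≤ d) {p q : ℚ[X]} (hq : q ≠ 0)
    (h : ldeg (gd d - polyToLS p / polyToLS q) < -2 * q.natDegree - (d - 1)) :
    wellApprox (gd d) := by
  intro C
  obtain ⟨p', q', hq', h'⟩ :=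
    exists_approx_gd_of_excess hd C.toNat zero_le_one hq (by linarith)
  refine ⟨p', q', hq', h'.trans_lt ?_⟩
  have : (C.toNat : ℤ) < d ^ C.toNat := by exact_mod_cast Nat.lt_pow_self (by omega)
  have := Int.self_le_toNat C
  omega

theorem isCoprime_and_ldeg_gd_sub_div_comp_X_pow (hd : 2 ≤ d) (hbad : ¬ wellApprox (gd d))
    {p q : ℚ[X]} (hq : q ≠ 0)
    (h : ldeg (gd d - polyToLS p / polyToLS q) = -2 * q.natDegree - (d - 1)) :
    IsCoprime (gdFactor d * p.comp (X ^ d)) (q.comp (X ^ d)) ∧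
      ldeg (gd d - polyToLS (gdFactor d * p.comp (X ^ d)) / polyToLS (q.comp (X ^ d)))
        = -2 * (q.comp (X ^ d)).natDegree - (d - 1) := by
  have hqd : q.comp (X ^ d) ≠ 0 := (expand_eq_zero (by omega)).not.2 hq
  have hne : gd d - polyToLS p / polyToLS q ≠ 0 := ne_zero_of_ldeg_neg (by omega)
  have hldeg : ldeg (gd d - polyToLS (gdFactor d * p.comp (X ^ d)) / polyToLS (q.comp (X ^ d)))
      = -2 * (q.comp (X ^ d)).natDegree - (d - 1) := by
    rw [ldeg_gd_sub_div_comp_X_pow hd hne, h, natDegree_comp_X_pow]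
    push_cast [Nat.cast_sub hd]
    ring
  refine ⟨by_contra fun hnc => hbad ?_, hldeg⟩
  obtain ⟨c, hc, ⟨P, hP⟩, ⟨Q, hQ⟩⟩ := exists_dvd_dvd_of_not_isCoprime hqd hnc
  have hc0 : c ≠ 0 := by rintro rfl; simp at hc
  have hQ0 : Q ≠ 0 := by rintro rfl; exact hqd (by rw [hQ, mul_zero])
  refine wellApprox_gd_of_ldeg_lt hd (p := P) hQ0 ?_
  rw [hP, hQ, polyToLS_mul, polyToLS_mul, mul_div_mul_left _ _ (polyToLS_ne_zero hc0),
    natDegree_mul hc0 hQ0] at hldeg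
  rw [hldeg]
  push_cast
  linarith

end Approximation

theorem convergent_g3_step_general (hbad : ¬ wellApprox (gd 3)) (p q : ℚ[X])
    (hq : q ≠ 0)
    (h : ldeg (gd 3 - polyToLS p / polyToLS q) = -2 * (q.natDegree : ℤ) - 2) :
    IsCoprime (X ^ 3 * (X - 1) * p.comp (X ^ 3)) (q.comp (X ^ 3)) ∧
    ldeg (gd 3 - polyToLS (X ^ 3 * (X - 1) * p.comp (X ^ 3)) / polyToLS (q.comp (X ^ 3)))
      = -6 * (q.natDegree : ℤ) - 2 := by
  have hfactor : gdFactor 3 = X ^ 3 * (X - 1) := rfl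
  obtain ⟨hcop, hldeg⟩ :=
    isCoprime_and_ldeg_gd_sub_div_comp_X_pow (by norm_num) hbad hq (by rw [h]; norm_num)
  rw [hfactor] at hcop hldeg
  refine ⟨hcop, ?_⟩
  rw [hldeg, natDegree_comp_X_pow]
  push_cast
  ring

/-- Lemma 5 for `d = 3`: a convergent of `g_3` with rate of approximation 2
produces another convergent of `g_3` with rate of approximation 2. -/
theorem convergent_g3_step (hbad : ¬ wellApprox (gd 3)) (p q : ℚ[X])
    (hpq : IsCoprime p q) (hq : q ≠ 0)
    (h : ldeg (gd 3 - polyToLS p / polyToLS q) = -2 * (q.natDegree : ℤ) - 2) :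
    IsCoprime (X ^ 3 * (X - 1) * p.comp (X ^ 3)) (q.comp (X ^ 3)) ∧
    ldeg (gd 3 - polyToLS (X ^ 3 * (X - 1) * p.comp (X ^ 3)) / polyToLS (q.comp (X ^ 3)))
      = -6 * (q.natDegree : ℤ) - 2 :=
  convergent_g3_step_general hbad p q hq h
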